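/- Let D be a classical relative entropy (a divergence on pairs of finite probability vectors satisfying data processing under stochastic matrices, additivity under tensor products, and D((1,0)||(1/2,1/2)) = 1). Then for all probability vectors p, q of the same dimension, D_min(p||q) ≤ D(p||q) ≤ D_max(p||q), where D_max(p||q) = log_2 min{t ≥ 0 : t q_x ≥ p_x for all x} (and ∞ if no such t exists) and D_min(p||q) = -log_2 Σ_{x : p_x > 0} q_x. -/

import Mathlib

open scoped BigOperators

def IsProbVec {ι : Type} [Fintype ι] (p : ι → ℝ) : Prop :=
  (∀ i, 0 ≤ p i) ∧ ∑ i, p i = 1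

def IsStochastic {α β : Type} [Fintype α] [Fintype β] (E : Matrix α β ℝ) : Prop :=
  (∀ i j, 0 ≤ E i j) ∧ ∀ j, ∑ i, E i j = 1

def kron {m n : ℕ} (p : Fin m → ℝ) (q : Fin n → ℝ) : Fin (m * n) → ℝ :=
  fun i => p (finProdFinEquiv.symm i).1 * q (finProdFinEquiv.symm i).2

open Classical in
noncomputable def DmaxCl {n : ℕ} (p q : Fin n → ℝ) : EReal :=
  if ∃ t : ℝ, 0 ≤ t ∧ ∀ x, p x ≤ t * q x
  then ((Real.logb 2 (sInf {t : ℝ | 0 ≤ t ∧ ∀ x, p x ≤ t * q x}) : ℝ) : EReal)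
  else ⊤

open Classical in
noncomputable def DminCl {n : ℕ} (p q : Fin n → ℝ) : EReal :=
  ((-Real.logb 2 (∑ x ∈ Finset.univ.filter (fun x => 0 < p x), q x) : ℝ) : EReal)

/-!
Data processing through the channel that discards its input and through the one that prepares
a fixed state, together with additivity and normalization, gives `D(p‖p) = 0` and `D ≥ 0`.
The function `f l = D((1,0)‖(l,1-l))` is antitone, and additivity makes it turn products into
sums, because `(1,0)⊗(1,0)` and `(a,1-a)⊗(b,1-b)` are carried to `(1,0)` and `(ab,1-ab)` and
back by channels; with `f(1/2) = 1` this forces `f = -log₂`.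
Coarse-graining `p, q` to "inside the support of `p` or not" gives `D(p‖q) ≥ f(Q) = D_min`.
Writing `q = t⁻¹ p + (1 - t⁻¹) r`, with `t` the optimal constant in `D_max`, exhibits
`(p, q)` as the image of `((1,0), (t⁻¹,1-t⁻¹))` under a channel, so
`D(p‖q) ≤ f(t⁻¹) = log₂ t`.
-/

open Set Real
open scoped Matrix

theorem MonotoneOn.eq_self_of_map_add {h : ℝ → ℝ} (hmono : MonotoneOn h (Ici 0))
    (hadd : ∀ x, 0 ≤ x → ∀ y, 0 ≤ y → h (x + y) = h x + h y) (hone : h 1 = 1)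
    {x : ℝ} (hx : 0 ≤ x) : h x = x := by
  have hsmul : ∀ n : ℕ, ∀ y, 0 ≤ y → h (n * y) = n * h y := by
    intro n y hy
    induction n with
    | zero => simpa using hadd 0 le_rfl 0 le_rfl
    | succ n ih =>
      rw [Nat.cast_succ, add_mul, one_mul, hadd _ (by positivity) _ hy, ih, add_mul, one_mul]
  have hnat : ∀ n : ℕ, h n = n := fun n => by simpa [hone] using hsmul n 1 zero_le_one
  refine eq_of_forall_dist_le fun ε hε => ?_
  obtain ⟨m, hm⟩ := exists_nat_one_div_lt hε
  set N : ℝ := m + 1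
  have hN : 0 < N := by positivity
  set k := ⌊N * x⌋₊
  have hk : (k : ℝ) ≤ N * x := Nat.floor_le (by positivity)
  have hk' : N * x < k + 1 := Nat.lt_floor_add_one _
  have hNx : h (N * x) = N * h x := by simpa [N] using hsmul (m + 1) x hx
  have hlo : (k : ℝ) ≤ N * h x := by
    rw [← hnat, ← hNx]
    exact hmono (mem_Ici.2 (Nat.cast_nonneg k)) (mem_Ici.2 (by positivity)) hk
  have hhi : N * h x ≤ k + 1 := by
    rw [← hNx, ← Nat.cast_succ, ← hnat]
    exact hmono (mem_Ici.2 (by positivity)) (mem_Ici.2 (by positivity))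
      (by push_cast; exact hk'.le)
  have hgap : |N * h x - N * x| ≤ 1 := abs_sub_le_iff.2 ⟨by linarith, by linarith⟩
  calc dist (h x) x = |N * h x - N * x| / N := by
        rw [Real.dist_eq, ← mul_sub, abs_mul, abs_of_pos hN, mul_div_cancel_left₀ _ hN.ne']
    _ ≤ 1 / N := by gcongr
    _ ≤ ε := hm.le

theorem eq_neg_logb_of_antitoneOn_of_map_mul {g : ℝ → ℝ} (hanti : AntitoneOn g (Ioc 0 1))
    (hmul : ∀ a ∈ Ioc (0 : ℝ) 1, ∀ b ∈ Ioc (0 : ℝ) 1, g (a * b) = g a + g b)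
    (hhalf : g (1 / 2) = 1) {l : ℝ} (hl : l ∈ Ioc 0 1) : g l = -logb 2 l := by
  have hpow_mem : ∀ x : ℝ, 0 ≤ x → (2 : ℝ) ^ (-x) ∈ Ioc 0 1 := fun x hx =>
    ⟨by positivity, rpow_le_one_of_one_le_of_nonpos one_le_two (neg_nonpos.2 hx)⟩
  have key := MonotoneOn.eq_self_of_map_add (h := fun x => g (2 ^ (-x)))
    (fun x hx y hy hxy => hanti (hpow_mem y hy) (hpow_mem x hx)
      (rpow_le_rpow_of_exponent_le one_le_two (neg_le_neg hxy)))
    (fun x hx y hy => by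
      simp only [neg_add, rpow_add two_pos]
      exact hmul _ (hpow_mem x hx) _ (hpow_mem y hy))
    (by simpa [rpow_neg_one] using hhalf)
    (neg_nonneg.2 (logb_nonpos one_lt_two hl.1.le hl.2))
  simpa [rpow_logb two_pos (by norm_num) hl.1] using key

def binary (a : ℝ) : Fin 2 → ℝ := ![a, 1 - a]

theorem isProbVec_binary {a : ℝ} (h0 : 0 ≤ a) (h1 : a ≤ 1) : IsProbVec (binary a) :=
  ⟨fun i => by fin_cases i <;> simp [binary, h0, h1], by simp [binary]⟩

theorem binary_one : binary 1 = ![1, 0] := by simp [binary]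

theorem binary_half : binary (1 / 2) = ![1 / 2, 1 / 2] := by norm_num [binary]

theorem isProbVec_one_zero : IsProbVec (![1, 0] : Fin 2 → ℝ) :=
  binary_one ▸ isProbVec_binary zero_le_one le_rfl

theorem isProbVec_one : IsProbVec (1 : Fin 1 → ℝ) := ⟨fun _ => zero_le_one, by simp⟩

theorem IsProbVec.kron {m n : ℕ} {p : Fin m → ℝ} {q : Fin n → ℝ}
    (hp : IsProbVec p) (hq : IsProbVec q) : IsProbVec (kron p q) := by
  refine ⟨fun i => mul_nonneg (hp.1 _) (hq.1 _), ?_⟩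
  rw [← finProdFinEquiv.sum_comp, Fintype.sum_prod_type]
  simp [_root_.kron, ← Finset.mul_sum, hp.2, hq.2]

theorem kron_two_two (u v : Fin 2 → ℝ) :
    kron u v = ![u 0 * v 0, u 0 * v 1, u 1 * v 0, u 1 * v 1] := by
  funext k; fin_cases k <;> rfl

theorem kron_one_right (u : Fin 2 → ℝ) : kron u (1 : Fin 1 → ℝ) = u := by
  funext k; fin_cases k <;> simp [kron] <;> rfl

noncomputable def remainder {n : ℕ} (t : ℝ) (u v : Fin n → ℝ) : Fin n → ℝ :=
  (1 - t)⁻¹ • (v - t • u)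

theorem isProbVec_remainder {n : ℕ} {t : ℝ} {u v : Fin n → ℝ} (hu : IsProbVec u)
    (hv : IsProbVec v) (ht : t < 1) (htuv : ∀ i, t * u i ≤ v i) :
    IsProbVec (remainder t u v) := by
  have h1t : 0 < 1 - t := sub_pos.2 ht
  refine ⟨fun i => mul_nonneg (inv_nonneg.2 h1t.le) (sub_nonneg.2 (htuv i)), ?_⟩
  simp only [remainder, Pi.smul_apply, Pi.sub_apply, smul_eq_mul, ← Finset.mul_sum,
    Finset.sum_sub_distrib, hu.2, hv.2, mul_one]
  exact inv_mul_cancel₀ h1t.ne'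

theorem mix_remainder {n : ℕ} {t : ℝ} (u v : Fin n → ℝ) (ht : t < 1) :
    t • u + (1 - t) • remainder t u v = v := by
  rw [remainder, smul_smul, mul_inv_cancel₀ (sub_pos.2 ht).ne', one_smul, add_sub_cancel]

def prepare {n : ℕ} (u w : Fin n → ℝ) : Matrix (Fin n) (Fin 2) ℝ :=
  Matrix.of fun i j => ![u i, w i] j

theorem isStochastic_prepare {n : ℕ} {u w : Fin n → ℝ} (hu : IsProbVec u) (hw : IsProbVec w) :
    IsStochastic (prepare u w) :=
  ⟨fun i j => by fin_cases j <;> simp [prepare, hu.1 i, hw.1 i],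
   fun j => by fin_cases j <;> simp [prepare, hu.2, hw.2]⟩

theorem prepare_mulVec_binary {n : ℕ} (u w : Fin n → ℝ) (t : ℝ) :
    prepare u w *ᵥ binary t = t • u + (1 - t) • w := by
  funext i; simp [prepare, binary, Matrix.mulVec, dotProduct, Fin.sum_univ_two, mul_comm]

def coarseGrain {n : ℕ} (S : Finset (Fin n)) : Matrix (Fin 2) (Fin n) ℝ :=
  Matrix.of ![fun j => if j ∈ S then 1 else 0, fun j => if j ∈ S then 0 else 1]

theorem isStochastic_coarseGrain {n : ℕ} (S : Finset (Fin n)) : IsStochastic (coarseGrain S) :=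
  ⟨fun i j => by fin_cases i <;> by_cases hj : j ∈ S <;> simp [coarseGrain, hj],
   fun j => by by_cases hj : j ∈ S <;> simp [coarseGrain, hj]⟩

theorem coarseGrain_mulVec {n : ℕ} (S : Finset (Fin n)) {v : Fin n → ℝ}
    (hv : ∑ j, v j = 1) : coarseGrain S *ᵥ v = binary (∑ j ∈ S, v j) := by
  have hcompl : (∑ j, if j ∈ S then 0 else v j) = 1 - ∑ j ∈ S, v j := by
    rw [← hv, ← Finset.sum_compl_add_sum S v, add_sub_cancel_right, Finset.sum_ite,
      Finset.sum_const_zero, zero_add]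
    congr 1; ext; simp
  funext i; fin_cases i <;> simp [coarseGrain, binary, Matrix.mulVec, dotProduct, hcompl]

abbrev Divergence : Type := ∀ n : ℕ, (Fin n → ℝ) → (Fin n → ℝ) → EReal

def DataProcessing (D : Divergence) : Prop :=
  ∀ (n m : ℕ) (p q : Fin n → ℝ) (E : Matrix (Fin m) (Fin n) ℝ),
    IsProbVec p → IsProbVec q → IsStochastic E → D m (E *ᵥ p) (E *ᵥ q) ≤ D n p q

def TensorAdditive (D : Divergence) : Prop :=
  ∀ (n m : ℕ) (p q : Fin n → ℝ) (p' q' : Fin m → ℝ),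
    IsProbVec p → IsProbVec q → IsProbVec p' → IsProbVec q' →
    D (n * m) (kron p p') (kron q q') = D n p q + D m p' q'

structure IsRelEntropy (D : Divergence) : Prop where
  dataProcessing : DataProcessing D
  tensorAdditive : TensorAdditive D
  normalized : D 2 ![1, 0] ![1 / 2, 1 / 2] = 1

def binaryDiv (D : Divergence) (l : ℝ) : EReal :=
  D 2 ![1, 0] (binary l)

section RelEntropy

variable {D : Divergence}

theorem TensorAdditive.apply_one_one (hA : TensorAdditive D)
    (hN : D 2 ![1, 0] ![1 / 2, 1 / 2] = 1) : D 1 1 1 = 0 := by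
  have h := hA 2 1 ![1, 0] ![1 / 2, 1 / 2] 1 1
    isProbVec_one_zero
    (binary_half ▸ isProbVec_binary (by norm_num) (by norm_num))
    isProbVec_one isProbVec_one
  rw [kron_one_right, kron_one_right, hN] at h
  -- `h : 1 = 1 + D 1 1 1`; cancel the finite `1`
  have hcancel := EReal.add_sub_cancel_left (a := D 1 1 1) (b := 1)
  rwa [EReal.coe_one, ← h, ← EReal.coe_one, ← EReal.coe_sub, sub_self, EReal.coe_zero,
    eq_comm] at hcancel

namespace DataProcessing

variable (hD : DataProcessing D)
include hD

theorem binaryDiv_le {n : ℕ} {u v : Fin n → ℝ} (hu : IsProbVec u) (hv : IsProbVec v)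
    (S : Finset (Fin n)) (hS : ∑ j ∈ S, u j = 1) :
    binaryDiv D (∑ j ∈ S, v j) ≤ D n u v := by
  have h := hD n 2 u v (coarseGrain S) hu hv (isStochastic_coarseGrain S)
  rwa [coarseGrain_mulVec S hu.2, coarseGrain_mulVec S hv.2, hS, binary_one] at h

theorem le_binaryDiv_of_lt_one {n : ℕ} {u v : Fin n → ℝ} (hu : IsProbVec u) (hv : IsProbVec v)
    {t : ℝ} (ht0 : 0 ≤ t) (ht1 : t < 1) (htuv : ∀ i, t * u i ≤ v i) :
    D n u v ≤ binaryDiv D t := by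
  have h := hD 2 n (binary 1) (binary t) (prepare u (remainder t u v))
    (isProbVec_binary zero_le_one le_rfl) (isProbVec_binary ht0 ht1.le)
    (isStochastic_prepare hu (isProbVec_remainder hu hv ht1 htuv))
  rwa [prepare_mulVec_binary, prepare_mulVec_binary, mix_remainder u v ht1, one_smul, sub_self,
    zero_smul, add_zero, binary_one] at h

theorem binaryDiv_antitoneOn : AntitoneOn (binaryDiv D) (Icc 0 1) := by
  intro a ha b hb hab
  rcases hab.eq_or_lt with rfl | hlt
  · rfl
  · have h := hD.le_binaryDiv_of_lt_one (isProbVec_binary zero_le_one le_rfl)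
      (isProbVec_binary hb.1 hb.2) ha.1 (hlt.trans_le hb.2)
      (fun i => by fin_cases i <;> simp [binary, hab, hb.2])
    rwa [binary_one] at h

end DataProcessing

namespace IsRelEntropy

variable (hD : IsRelEntropy D)
include hD

theorem nonneg {n : ℕ} {p q : Fin n → ℝ} (hp : IsProbVec p) (hq : IsProbVec q) :
    0 ≤ D n p q := by
  set E : Matrix (Fin 1) (Fin n) ℝ := Matrix.of fun _ _ => 1
  have hdiscard : ∀ v : Fin n → ℝ, IsProbVec v → E *ᵥ v = 1 :=
    fun v hv => by funext; simp [E, Matrix.mulVec, dotProduct, hv.2]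
  have h := hD.dataProcessing n 1 p q E hp hq
    ⟨fun _ _ => zero_le_one, fun _ => by simp [E]⟩
  rwa [hdiscard p hp, hdiscard q hq, hD.tensorAdditive.apply_one_one hD.normalized] at h

theorem apply_self {n : ℕ} {p : Fin n → ℝ} (hp : IsProbVec p) : D n p p = 0 := by
  have hprepare : Matrix.of (fun i (_ : Fin 1) => p i) *ᵥ 1 = p := by
    funext; simp [Matrix.mulVec, dotProduct]
  have h := hD.dataProcessing 1 n 1 1 (Matrix.of fun i _ => p i) isProbVec_one isProbVec_one
    ⟨fun i _ => hp.1 i, fun _ => hp.2⟩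
  rw [hprepare, hD.tensorAdditive.apply_one_one hD.normalized] at h
  exact le_antisymm h (hD.nonneg hp hp)

theorem binaryDiv_one : binaryDiv D 1 = 0 := by
  rw [binaryDiv, binary_one]
  exact hD.apply_self isProbVec_one_zero

theorem le_binaryDiv {n : ℕ} {u v : Fin n → ℝ} (hu : IsProbVec u) (hv : IsProbVec v)
    {t : ℝ} (ht0 : 0 ≤ t) (ht1 : t ≤ 1) (htuv : ∀ i, t * u i ≤ v i) :
    D n u v ≤ binaryDiv D t := by
  rcases ht1.lt_or_eq with ht1 | rfl
  · exact hD.dataProcessing.le_binaryDiv_of_lt_one hu hv ht0 ht1 htuv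
  · have hle : ∀ i ∈ Finset.univ, u i ≤ v i := fun i _ => by simpa using htuv i
    have huv : u = v := funext fun i =>
      (Finset.sum_eq_sum_iff_of_le hle).1 (by rw [hu.2, hv.2]) i (Finset.mem_univ i)
    rw [huv, hD.apply_self hv, hD.binaryDiv_one]

theorem binaryDiv_mul {a b : ℝ} (ha : a ∈ Icc (0 : ℝ) 1) (hb : b ∈ Icc (0 : ℝ) 1) :
    binaryDiv D (a * b) = binaryDiv D a + binaryDiv D b := by
  have hu := isProbVec_one_zero.kron isProbVec_one_zero
  have hv := (isProbVec_binary ha.1 ha.2).kron (isProbVec_binary hb.1 hb.2)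
  unfold binaryDiv
  rw [← hD.tensorAdditive 2 2 _ _ _ _ isProbVec_one_zero (isProbVec_binary ha.1 ha.2)
    isProbVec_one_zero (isProbVec_binary hb.1 hb.2)]
  apply le_antisymm
  · simpa [binaryDiv, kron_two_two, binary] using
      hD.dataProcessing.binaryDiv_le hu hv {0} (by simp [kron_two_two])
  · refine hD.le_binaryDiv hu hv (mul_nonneg ha.1 hb.1) (mul_le_one₀ ha.2 hb.1 hb.2) ?_
    intro i
    fin_cases i <;> simp [kron_two_two, binary] <;>
      exact mul_nonneg (by linarith [ha.1, ha.2]) (by linarith [hb.1, hb.2])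

theorem binaryDiv_half : binaryDiv D (1 / 2) = 1 := by
  rw [binaryDiv, binary_half]; exact hD.normalized

theorem binaryDiv_half_pow (k : ℕ) : binaryDiv D ((1 / 2) ^ k) = k := by
  induction k with
  | zero => rw [pow_zero, hD.binaryDiv_one, Nat.cast_zero]
  | succ k ih =>
    rw [pow_succ, hD.binaryDiv_mul ⟨by positivity, pow_le_one₀ (by norm_num) (by norm_num)⟩
      ⟨by norm_num, by norm_num⟩, ih, hD.binaryDiv_half, Nat.cast_succ]

theorem coe_toReal_binaryDiv {l : ℝ} (hl : l ∈ Ioc (0 : ℝ) 1) :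
    ((binaryDiv D l).toReal : EReal) = binaryDiv D l := by
  have hnonneg : 0 ≤ binaryDiv D l :=
    hD.nonneg isProbVec_one_zero (isProbVec_binary hl.1.le hl.2)
  obtain ⟨k, hk⟩ := exists_pow_lt_of_lt_one hl.1 (by norm_num : (1 / 2 : ℝ) < 1)
  have hle : binaryDiv D l ≤ k := hD.binaryDiv_half_pow k ▸
    hD.dataProcessing.binaryDiv_antitoneOn
      ⟨by positivity, pow_le_one₀ (by norm_num) (by norm_num)⟩ (Ioc_subset_Icc_self hl) hk.le
  exact EReal.coe_toReal (ne_top_of_le_ne_top (EReal.natCast_ne_top k) hle)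
    (ne_bot_of_le_ne_bot EReal.zero_ne_bot hnonneg)

theorem binaryDiv_eq_neg_logb {l : ℝ} (hl : l ∈ Ioc (0 : ℝ) 1) :
    binaryDiv D l = ((-logb 2 l : ℝ) : EReal) := by
  rw [← hD.coe_toReal_binaryDiv hl, EReal.coe_eq_coe_iff]
  refine eq_neg_logb_of_antitoneOn_of_map_mul (g := fun l => (binaryDiv D l).toReal)
    (fun a ha b hb hab => ?_) (fun a ha b hb => ?_) ?_ hl
  · rw [← EReal.coe_le_coe_iff, hD.coe_toReal_binaryDiv ha, hD.coe_toReal_binaryDiv hb]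
    exact hD.dataProcessing.binaryDiv_antitoneOn (Ioc_subset_Icc_self ha)
      (Ioc_subset_Icc_self hb) hab
  · rw [← EReal.coe_eq_coe_iff, EReal.coe_add, hD.coe_toReal_binaryDiv ha,
      hD.coe_toReal_binaryDiv hb,
      hD.coe_toReal_binaryDiv ⟨mul_pos ha.1 hb.1, mul_le_one₀ ha.2 hb.1.le hb.2⟩,
      hD.binaryDiv_mul (Ioc_subset_Icc_self ha) (Ioc_subset_Icc_self hb)]
  · rw [← EReal.coe_eq_coe_iff, hD.coe_toReal_binaryDiv ⟨by norm_num, by norm_num⟩,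
      hD.binaryDiv_half, EReal.coe_one]

theorem dminCl_le {n : ℕ} {p q : Fin n → ℝ} (hp : IsProbVec p) (hq : IsProbVec q) :
    DminCl p q ≤ D n p q := by
  rw [DminCl]
  set S := Finset.univ.filter fun x => 0 < p x
  have hpS : ∑ j ∈ S, p j = 1 :=
    (Finset.sum_filter_of_ne fun x _ hx => (hp.1 x).lt_of_ne' hx).trans hp.2
  have hqS0 : 0 ≤ ∑ j ∈ S, q j := Finset.sum_nonneg fun j _ => hq.1 j
  have hqS1 : ∑ j ∈ S, q j ≤ 1 :=
    hq.2 ▸ Finset.sum_le_univ_sum_of_nonneg hq.1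
  rcases hqS0.eq_or_lt with hqS0 | hqS0
  · rw [← hqS0, logb_zero, neg_zero, EReal.coe_zero]
    exact hD.nonneg hp hq
  · rw [← hD.binaryDiv_eq_neg_logb ⟨hqS0, hqS1⟩]
    exact hD.dataProcessing.binaryDiv_le hp hq S hpS

theorem le_dmaxCl {n : ℕ} {p q : Fin n → ℝ} (hp : IsProbVec p) (hq : IsProbVec q) :
    D n p q ≤ DmaxCl p q := by
  rw [DmaxCl]
  split_ifs with hex
  swap; · exact le_top
  set T := {t : ℝ | 0 ≤ t ∧ ∀ x, p x ≤ t * q x}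
  have hT : IsClosed T := by
    simp only [T, ofPred_and, ofPred_forall]
    exact isClosed_Ici.inter
      (isClosed_iInter fun x => isClosed_le continuous_const (continuous_id.mul continuous_const))
  obtain ⟨ht0, hpq⟩ : sInf T ∈ T := hT.csInf_mem hex ⟨0, fun t ht => ht.1⟩
  set t₀ := sInf T
  have h1t : 1 ≤ t₀ := by
    simpa [← Finset.mul_sum, hp.2, hq.2] using
      Finset.sum_le_sum fun x (_ : x ∈ Finset.univ) => hpq x
  have hinv : t₀⁻¹ ∈ Ioc (0 : ℝ) 1 := ⟨by positivity, inv_le_one_of_one_le₀ h1t⟩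
  have h := hD.le_binaryDiv hp hq hinv.1.le hinv.2
    fun x => (inv_mul_le_iff₀ (by positivity)).2 (hpq x)
  rwa [hD.binaryDiv_eq_neg_logb hinv, logb_inv, neg_neg] at h

end IsRelEntropy

end RelEntropy

/-- Any classical relative entropy lies between `D_min` and `D_max`. -/
theorem stmt1
    (D : ∀ n : ℕ, (Fin n → ℝ) → (Fin n → ℝ) → EReal)
    (hDPI : ∀ (n m : ℕ) (p q : Fin n → ℝ) (E : Matrix (Fin m) (Fin n) ℝ),
      IsProbVec p → IsProbVec q → IsStochastic E →
      D m (E.mulVec p) (E.mulVec q) ≤ D n p q)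
    (hAdd : ∀ (n m : ℕ) (p q : Fin n → ℝ) (p' q' : Fin m → ℝ),
      IsProbVec p → IsProbVec q → IsProbVec p' → IsProbVec q' →
      D (n * m) (kron p p') (kron q q') = D n p q + D m p' q')
    (hNorm : D 2 ![1, 0] ![1/2, 1/2] = 1) :
    ∀ (n : ℕ) (p q : Fin n → ℝ), IsProbVec p → IsProbVec q →
      DminCl p q ≤ D n p q ∧ D n p q ≤ DmaxCl p q := by
  intro n p q hp hq
  have hD : IsRelEntropy D := ⟨hDPI, hAdd, hNorm⟩
  exact ⟨hD.dminCl_le hp hq, hD.le_dmaxCl hp hq⟩
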